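/- arXiv:math/0512061 — 2 statements merged into one kernel-verified Lean document; each statement's English description precedes it below -/
import Mathlib

section
/- Suppose a random vector v in ℝ^d takes at most finitely many values and for every unit vector l there exist constants c_l, c_{−l} ≥ 0 such that almost surely l·v ∈ {c_l, −c_{−l}, 0} with l·v = c_l on {v·l > 0} and l·v = −c_{−l} on {v·l < 0}. Then all nonzero values of v are collinear: there exists a unit vector l_* such that P(v ∈ ℝ l_*) = 1. -/
open MeasureTheory Filter
open scoped RealInnerProductSpace

/-- Given two linearly "non-collinear" vectors, there is a unit vector whose inner products
with both are positive and distinct. -/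
lemma exists_separating_dir {d : ℕ} {x y : EuclideanSpace ℝ (Fin d)}
    (hx : x ≠ 0) (hy : ¬ ∃ c : ℝ, y = c • x) :
    ∃ l : EuclideanSpace ℝ (Fin d), ‖l‖ = 1 ∧ 0 < ⟪l, x⟫ ∧ 0 < ⟪l, y⟫ ∧ ⟪l, x⟫ ≠ ⟪l, y⟫ := by
  have hxn : (0:ℝ) < ‖x‖ ^ 2 := pow_pos (norm_pos_iff.mpr hx) 2
  set a : ℝ := ⟪x, y⟫ / ‖x‖ ^ 2 with ha
  set w : EuclideanSpace ℝ (Fin d) := y - a • x with hw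
  have hwne : w ≠ 0 := by
    intro h
    exact hy ⟨a, by rw [hw] at h; linear_combination (norm := module) h⟩
  have hxw : ⟪x, w⟫ = 0 := by
    rw [hw, inner_sub_right, real_inner_smul_right, ha, real_inner_self_eq_norm_sq]
    field_simp
    ring
  have hwx : ⟪w, x⟫ = 0 := by rw [real_inner_comm]; exact hxw
  have hwy : ⟪w, y⟫ = ‖w‖ ^ 2 := by
    have : ⟪w, y⟫ = ⟪w, w⟫ + a * ⟪w, x⟫ := by
      rw [← real_inner_smul_right, ← inner_add_right, hw]; congr 1; module
    rw [this, hwx, real_inner_self_eq_norm_sq]; ring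
  have hwn : (0:ℝ) < ‖w‖ ^ 2 := pow_pos (norm_pos_iff.mpr hwne) 2
  set t : ℝ := (2 - a) / ‖w‖ ^ 2 with ht
  set l₀ : EuclideanSpace ℝ (Fin d) := (‖x‖ ^ 2)⁻¹ • x + t • w with hl₀
  have hl0x : ⟪l₀, x⟫ = 1 := by
    rw [hl₀, inner_add_left, real_inner_smul_left, real_inner_smul_left,
      real_inner_self_eq_norm_sq, hwx]
    field_simp
    ring
  have hl0y : ⟪l₀, y⟫ = 2 := by
    rw [hl₀, inner_add_left, real_inner_smul_left, real_inner_smul_left, hwy, ht]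
    have hxy : ⟪x, y⟫ = a * ‖x‖ ^ 2 := by rw [ha]; field_simp
    rw [hxy]
    field_simp
    ring
  have hl0ne : l₀ ≠ 0 := by
    intro h; rw [h] at hl0x; simp at hl0x
  have hnl0 : (0:ℝ) < ‖l₀‖ := norm_pos_iff.mpr hl0ne
  refine ⟨‖l₀‖⁻¹ • l₀, ?_, ?_, ?_, ?_⟩
  · rw [norm_smul]; simp [abs_of_pos hnl0]; field_simp
  · rw [real_inner_smul_left, hl0x]; positivity
  · rw [real_inner_smul_left, hl0y]; positivity
  · rw [real_inner_smul_left, real_inner_smul_left, hl0x, hl0y]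
    intro h
    field_simp at h
    norm_num at h

/-- a random vector v with finitely many values whose projection on every
direction l almost surely takes a fixed nonnegative value c_l on {l·v > 0} and a fixed
nonpositive value −c_{−l} on {l·v < 0} has all its values collinear: v ∈ ℝ l* a.s. for
some unit vector l*. -/
theorem stmt12 {d : ℕ} (hd : 0 < d) {Ω : Type*} [MeasurableSpace Ω]
    (μ : Measure Ω) [IsProbabilityMeasure μ]
    (v : Ω → EuclideanSpace ℝ (Fin d)) (hmeas : Measurable v)
    (hfin : (Set.range v).Finite)
    (hdir : ∀ l : EuclideanSpace ℝ (Fin d), ‖l‖ = 1 → ∃ c₁ c₂ : ℝ, 0 ≤ c₁ ∧ 0 ≤ c₂ ∧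
      ∀ᵐ ω ∂μ, (0 < ⟪l, v ω⟫ → ⟪l, v ω⟫ = c₁) ∧ (⟪l, v ω⟫ < 0 → ⟪l, v ω⟫ = -c₂)) :
    ∃ lstar : EuclideanSpace ℝ (Fin d), ‖lstar‖ = 1 ∧
      ∀ᵐ ω ∂μ, ∃ c : ℝ, v ω = c • lstar := by
  classical
  set S : Set (EuclideanSpace ℝ (Fin d)) :=
    {x | x ∈ Set.range v ∧ μ (v ⁻¹' {x}) ≠ 0} with hSdef
  -- almost surely v ω ∈ S
  have hS : ∀ᵐ ω ∂μ, v ω ∈ S := by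
    set F : Set (EuclideanSpace ℝ (Fin d)) :=
      {x | x ∈ Set.range v ∧ μ (v ⁻¹' {x}) = 0} with hFdef
    have hFfin : F.Finite := hfin.subset (fun x hx => hx.1)
    have hnull : μ (⋃ x ∈ F, v ⁻¹' {x}) = 0 := by
      rw [measure_biUnion_null_iff hFfin.countable]
      exact fun x hx => hx.2
    refine measure_mono_null ?_ hnull
    intro ω hω
    simp only [Set.mem_setOf_eq, Set.mem_compl_iff] at hω
    have h1 : v ω ∈ Set.range v := ⟨ω, rfl⟩
    have h2 : μ (v ⁻¹' {v ω}) = 0 := by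
      by_contra h
      exact hω ⟨h1, h⟩
    exact Set.mem_biUnion ⟨h1, h2⟩ rfl
  -- key: for x nonzero in S, every y in S is a multiple of x
  have key : ∀ x ∈ S, ∀ y ∈ S, x ≠ 0 → ∃ c : ℝ, y = c • x := by
    intro x hx y hy hxne
    by_contra hcon
    obtain ⟨l, hl1, hlx, hly, hlne⟩ := exists_separating_dir hxne hcon
    obtain ⟨c₁, c₂, _, _, hae⟩ := hdir l hl1
    have hxval : ⟪l, x⟫ = c₁ := by
      obtain ⟨ω, hω, hP⟩ := Measure.exists_mem_of_measure_ne_zero_of_ae hx.2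
        (ae_restrict_of_ae hae)
      have hvx : v ω = x := hω
      rw [← hvx]
      exact hP.1 (by rw [hvx]; exact hlx)
    have hyval : ⟪l, y⟫ = c₁ := by
      obtain ⟨ω, hω, hP⟩ := Measure.exists_mem_of_measure_ne_zero_of_ae hy.2
        (ae_restrict_of_ae hae)
      have hvy : v ω = y := hω
      rw [← hvy]
      exact hP.1 (by rw [hvy]; exact hly)
    exact hlne (hxval.trans hyval.symm)
  by_cases hall : ∀ x ∈ S, x = 0
  · refine ⟨EuclideanSpace.single ⟨0, hd⟩ (1:ℝ), by simp [EuclideanSpace.norm_single], ?_⟩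
    filter_upwards [hS] with ω hω
    exact ⟨0, by rw [hall _ hω]; simp⟩
  · push_neg at hall
    obtain ⟨x, hxS, hxne⟩ := hall
    have hnx : (0:ℝ) < ‖x‖ := norm_pos_iff.mpr hxne
    refine ⟨‖x‖⁻¹ • x, ?_, ?_⟩
    · rw [norm_smul]; simp [abs_of_pos hnx]; field_simp
    · filter_upwards [hS] with ω hω
      obtain ⟨c, hc⟩ := key x hxS (v ω) hω hxne
      exact ⟨c * ‖x‖, by rw [hc, smul_smul]; congr 1; field_simp⟩
end

section
/- Let (ξ_k)_{k≥1} be i.i.d. positive random variables (a renewal sequence of increments, possibly with a delay ξ_0 ≥ 0 independent of the rest and a.s. finite), and set S_m = ξ_0 + ξ_1 + ⋯ + ξ_m. Suppose there exist c_0 > 0 and L > 0 such that for every r ≥ 0, P(∃ m ≥ 1 : S_m ∈ [r, r+L]) > c_0. Then E[ξ_1] ≤ L/c_0. -/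
open MeasureTheory ProbabilityTheory Filter
open scoped ENNReal NNReal

lemma stmt13_trunc {Ω : Type*} [MeasurableSpace Ω] (μ : Measure Ω) [IsProbabilityMeasure μ]
    (ξ : ℕ → Ω → ℝ)
    (hmeas : ∀ k, Measurable (ξ k))
    (hindep : iIndepFun ξ μ)
    (hident : ∀ k, 1 ≤ k → IdentDistrib (ξ k) (ξ 1) μ μ)
    (hpos : ∀ k, 1 ≤ k → ∀ᵐ ω ∂μ, 0 < ξ k ω)
    (hdelay : ∀ᵐ ω ∂μ, 0 ≤ ξ 0 ω)
    (c₀ L : ℝ) (hc₀ : 0 < c₀) (hL : 0 < L)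
    (hhit : ∀ r : ℝ, 0 ≤ r → ENNReal.ofReal c₀ <
      μ {ω | ∃ m : ℕ, 1 ≤ m ∧ (∑ k ∈ Finset.range (m + 1), ξ k ω) ∈ Set.Icc r (r + L)})
    (M : ℝ) (hM : 0 < M) :
    ∫⁻ ω, ENNReal.ofReal (min (ξ 1 ω) M) ∂μ ≤ ENNReal.ofReal (L / c₀) := by
  classical
  set S : ℕ → Ω → ℝ := fun m ω => ∑ k ∈ Finset.range (m+1), ξ k ω with hS
  have hSmeas : ∀ m, Measurable (S m) := fun m => Finset.measurable_sum _ fun k _ => hmeas k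
  set φ : ℕ → ℝ → ℝ := fun k x => if k = 0 then x else min x M with hφdef
  have hφm : ∀ k, Measurable (φ k) := by
    intro k
    by_cases h : k = 0 <;> simp only [hφdef, h, if_true, if_false, reduceIte] <;> fun_prop
  set η : ℕ → Ω → ℝ := fun k => φ k ∘ ξ k with hηdef
  have hηmeas : ∀ k, Measurable (η k) := fun k => (hφm k).comp (hmeas k)
  have hηindep : iIndepFun η μ := hindep.comp φ hφm
  have hη0 : ∀ ω, η 0 ω = ξ 0 ω := fun ω => by simp [hηdef, hφdef]
  have hηk : ∀ k, 1 ≤ k → ∀ ω, η k ω = min (ξ k ω) M := by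
    intro k hk ω
    simp [hηdef, hφdef, Nat.one_le_iff_ne_zero.mp hk]
  set S' : ℕ → Ω → ℝ := fun m ω => ∑ k ∈ Finset.range (m+1), η k ω with hS'
  have hS'meas : ∀ m, Measurable (S' m) := fun m => Finset.measurable_sum _ fun k _ => hηmeas k
  have hS'leS : ∀ m ω, S' m ω ≤ S m ω := by
    intro m ω
    refine Finset.sum_le_sum fun k _ => ?_
    rcases Nat.eq_zero_or_pos k with h | h
    · simp [h, hη0]
    · rw [hηk k h]; exact min_le_left _ _
  set I := ∫⁻ ω, ENNReal.ofReal (min (ξ 1 ω) M) ∂μ with hI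
  have hIle : I ≤ ENNReal.ofReal M := by
    calc I ≤ ∫⁻ _, ENNReal.ofReal M ∂μ :=
          lintegral_mono fun ω => ENNReal.ofReal_le_ofReal (min_le_right _ _)
      _ = ENNReal.ofReal M := by simp
  have hIfin : I ≠ ⊤ := (lt_of_le_of_lt hIle ENNReal.ofReal_lt_top).ne
  have hIeq : ∀ n, 1 ≤ n → ∫⁻ ω, ENNReal.ofReal (η n ω) ∂μ = I := by
    intro n hn
    have h2 : IdentDistrib (fun ω => ENNReal.ofReal (min (ξ n ω) M))
        (fun ω => ENNReal.ofReal (min (ξ 1 ω) M)) μ μ :=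
      (hident n hn).comp (by fun_prop : Measurable fun x : ℝ => ENNReal.ofReal (min x M))
    have := h2.lintegral_eq
    rw [hI, ← this]
    refine lintegral_congr fun ω => by rw [hηk n hn]
  -- a.e. positivity
  have haerec : ∀ᵐ ω ∂μ, ∀ k, 1 ≤ k → 0 < ξ k ω := by
    rw [ae_all_iff]
    intro k
    by_cases hk : 1 ≤ k
    · exact (hpos k hk).mono fun ω h _ => h
    · exact ae_of_all _ fun ω h => absurd h hk
  have haet : ∀ᵐ ω ∂μ, 0 ≤ ξ 0 ω ∧ ∀ k, 1 ≤ k → 0 < ξ k ω := hdelay.and haerec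
  -- the Wald-type upper bound, for any c ≥ 0
  have wald : ∀ c : ℝ, 0 ≤ c →
      I * ∑' m : ℕ, μ {ω | S' m ω ≤ c} ≤ ENNReal.ofReal (c + M) := by
    intro c hc
    -- per-term computation via independence
    have hterm : ∀ n : ℕ,
        ∫⁻ ω, ENNReal.ofReal (η (n+1) ω) * (if S' n ω ≤ c then (1:ℝ≥0∞) else 0) ∂μ
          = I * μ {ω | S' n ω ≤ c} := by
      intro n
      have hsum_eq : (∑ j ∈ Finset.range (n+1), η j) = S' n := by
        funext ω; simp [hS', Finset.sum_apply]
      have hbase : IndepFun (η (n+1)) (S' n) μ := by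
        rw [← hsum_eq]
        exact (hηindep.indepFun_sum_range_succ hηmeas (n+1)).symm
      have hind : IndepFun (fun ω => ENNReal.ofReal (η (n+1) ω))
          (fun ω => if S' n ω ≤ c then (1:ℝ≥0∞) else 0) μ := by
        have hmψ : Measurable (fun x : ℝ => if x ≤ c then (1:ℝ≥0∞) else 0) := by
          refine Measurable.ite ?_ measurable_const measurable_const
          exact measurableSet_Iic
        exact hbase.comp ENNReal.measurable_ofReal hmψ
      rw [lintegral_mul_eq_lintegral_mul_lintegral_of_indepFun''
          (by fun_prop : Measurable fun ω => ENNReal.ofReal (η (n+1) ω)).aemeasurable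
          ?_ hind]
      · rw [hIeq (n+1) (Nat.le_add_left 1 n)]
        congr 1
        have hms : MeasurableSet {ω | S' n ω ≤ c} := (hS'meas n) measurableSet_Iic
        rw [← lintegral_indicator_one hms]
        refine lintegral_congr fun ω => ?_
        by_cases h : S' n ω ≤ c <;> simp [Set.indicator_apply, h]
      · exact ((Measurable.ite ((hS'meas n) measurableSet_Iic) measurable_const
          measurable_const) : Measurable fun ω => if S' n ω ≤ c then (1:ℝ≥0∞) else 0).aemeasurable
    -- pointwise bound
    have hpoint : ∀ᵐ ω ∂μ, ∀ K : ℕ,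
        ∑ n ∈ Finset.range K, (if S' n ω ≤ c then η (n+1) ω else 0) ≤ c + M := by
      refine haet.mono fun ω hω K => ?_
      obtain ⟨h0, hk⟩ := hω
      have hηnn : ∀ n : ℕ, 0 ≤ η (n+1) ω := by
        intro n
        rw [hηk (n+1) (Nat.le_add_left 1 n)]
        exact le_min (hk (n+1) (Nat.le_add_left 1 n)).le hM.le
      induction K with
      | zero => simpa using by positivity
      | succ K ih =>
        rw [Finset.sum_range_succ]
        by_cases h : S' K ω ≤ c
        · have h1 : ∑ n ∈ Finset.range K, (if S' n ω ≤ c then η (n+1) ω else 0)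
              ≤ ∑ n ∈ Finset.range K, η (n+1) ω := by
            refine Finset.sum_le_sum fun n _ => ?_
            split <;> [exact le_rfl; exact hηnn n]
          have h2 : S' K ω = (∑ n ∈ Finset.range K, η (n+1) ω) + η 0 ω :=
            Finset.sum_range_succ' (fun k => η k ω) K
          have h3 : η (K+1) ω ≤ M := by
            rw [hηk (K+1) (Nat.le_add_left 1 K)]; exact min_le_right _ _
          have h4 : 0 ≤ η 0 ω := by rw [hη0]; exact h0
          simp only [h, if_true]
          linarith
        · simpa [h] using ih
    -- finite-sum bound
    have hfin : ∀ K : ℕ, ∑ n ∈ Finset.range K, I * μ {ω | S' n ω ≤ c}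
        ≤ ENNReal.ofReal (c + M) := by
      intro K
      have hmeasterm : ∀ n : ℕ, Measurable fun ω =>
          ENNReal.ofReal (η (n+1) ω) * (if S' n ω ≤ c then (1:ℝ≥0∞) else 0) := by
        intro n
        exact (ENNReal.measurable_ofReal.comp (hηmeas (n+1))).mul
          (Measurable.ite ((hS'meas n) measurableSet_Iic) measurable_const measurable_const)
      calc ∑ n ∈ Finset.range K, I * μ {ω | S' n ω ≤ c}
          = ∑ n ∈ Finset.range K, ∫⁻ ω,
              ENNReal.ofReal (η (n+1) ω) * (if S' n ω ≤ c then (1:ℝ≥0∞) else 0) ∂μ := by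
            refine Finset.sum_congr rfl fun n _ => (hterm n).symm
        _ = ∫⁻ ω, ∑ n ∈ Finset.range K,
              ENNReal.ofReal (η (n+1) ω) * (if S' n ω ≤ c then (1:ℝ≥0∞) else 0) ∂μ :=
            (lintegral_finset_sum _ fun n _ => hmeasterm n).symm
        _ ≤ ∫⁻ _, ENNReal.ofReal (c + M) ∂μ := by
            refine lintegral_mono_ae ((hpoint.and haet).mono fun ω hω => ?_)
            obtain ⟨hωK, h0, hk⟩ := hω
            have hηnn : ∀ n : ℕ, 0 ≤ η (n+1) ω := by
              intro n
              rw [hηk (n+1) (Nat.le_add_left 1 n)]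
              exact le_min (hk (n+1) (Nat.le_add_left 1 n)).le hM.le
            have heach : ∀ n : ℕ,
                ENNReal.ofReal (η (n+1) ω) * (if S' n ω ≤ c then (1:ℝ≥0∞) else 0)
                  = ENNReal.ofReal (if S' n ω ≤ c then η (n+1) ω else 0) := by
              intro n; by_cases h : S' n ω ≤ c <;> simp [h]
            calc ∑ n ∈ Finset.range K,
                  ENNReal.ofReal (η (n+1) ω) * (if S' n ω ≤ c then (1:ℝ≥0∞) else 0)
                = ∑ n ∈ Finset.range K,
                  ENNReal.ofReal (if S' n ω ≤ c then η (n+1) ω else 0) :=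
                  Finset.sum_congr rfl fun n _ => heach n
              _ = ENNReal.ofReal (∑ n ∈ Finset.range K,
                    (if S' n ω ≤ c then η (n+1) ω else 0)) := by
                  rw [ENNReal.ofReal_sum_of_nonneg]
                  intro n _
                  split <;> [exact hηnn n; exact le_rfl]
              _ ≤ ENNReal.ofReal (c + M) := ENNReal.ofReal_le_ofReal (hωK K)
        _ = ENNReal.ofReal (c + M) := by simp
    rw [← ENNReal.tsum_mul_left]
    refine tsum_le_of_sum_le' zero_le fun s => ?_
    rcases s.eq_empty_or_nonempty with rfl | hne
    · simp
    · obtain ⟨K, hK⟩ : ∃ K, s ⊆ Finset.range K :=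
        ⟨s.max' hne + 1, fun x hx => Finset.mem_range.mpr
          (Nat.lt_succ_of_le (s.le_max' x hx))⟩
      exact le_trans (Finset.sum_le_sum_of_subset hK) (hfin K)
  -- hitting lower bound
  have hit : ∀ (n : ℕ) (ε : ℝ), 0 < ε →
      (n : ℝ≥0∞) * ENNReal.ofReal c₀ ≤ ∑' m : ℕ, μ {ω | S' m ω ≤ n * (L + ε)} := by
    intro n ε hε
    set c : ℝ := n * (L + ε) with hcdef
    set A : ℕ → Set Ω := fun j => {ω | ∃ m : ℕ, 1 ≤ m ∧
      S m ω ∈ Set.Icc (j * (L + ε)) (j * (L + ε) + L)} with hA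
    have hAmeas : ∀ j, MeasurableSet (A j) := by
      intro j
      have : A j = ⋃ m : ℕ, ⋃ _ : 1 ≤ m,
          (S m) ⁻¹' (Set.Icc (j * (L+ε)) (j * (L+ε) + L)) := by
        ext ω; simp only [hA, Set.mem_setOf_eq, Set.mem_iUnion, Set.mem_preimage,
          Set.mem_Icc]; tauto
      rw [this]
      exact MeasurableSet.iUnion fun m => MeasurableSet.iUnion fun _ =>
        (hSmeas m) measurableSet_Icc
    have hAc₀ : ∀ j, ENNReal.ofReal c₀ ≤ μ (A j) := by
      intro j
      have hr : (0:ℝ) ≤ j * (L + ε) := by positivity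
      exact (hhit (j * (L + ε)) hr).le
    have hcount : ∀ ω, ∑ j ∈ Finset.range n, (A j).indicator (fun _ => (1:ℝ≥0∞)) ω
        ≤ ∑' m : ℕ, ({ω' | S m ω' ≤ c}).indicator (fun _ => (1:ℝ≥0∞)) ω := by
      intro ω
      set F := (Finset.range n).filter (fun j => ω ∈ A j) with hF
      have hwit : ∀ j ∈ F, ∃ m : ℕ, 1 ≤ m ∧
          S m ω ∈ Set.Icc (j * (L + ε)) (j * (L + ε) + L) :=
        fun j hj => (Finset.mem_filter.mp hj).2
      set w : ℕ → ℕ := fun j => if h : ∃ m : ℕ, 1 ≤ m ∧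
          S m ω ∈ Set.Icc (j * (L + ε)) (j * (L + ε) + L) then h.choose else 0 with hw
      have hwspec : ∀ j ∈ F, S (w j) ω ∈ Set.Icc (j * (L + ε)) (j * (L + ε) + L) := by
        intro j hj
        have h := hwit j hj
        simp only [hw, dif_pos h]
        exact h.choose_spec.2
      have hinj : Set.InjOn w F := by
        intro j hj j' hj' hjj
        by_contra hne
        rcases Ne.lt_or_gt hne with hlt | hlt
        · have h1 := (hwspec j hj).2
          have h2 := (hwspec j' hj').1
          rw [hjj] at h1
          have hcast : (j:ℝ) + 1 ≤ j' := by exact_mod_cast hlt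
          nlinarith
        · have h1 := (hwspec j' hj').2
          have h2 := (hwspec j hj).1
          rw [hjj] at h2
          have hcast : (j':ℝ) + 1 ≤ j := by exact_mod_cast hlt
          nlinarith
      have hLHS : ∑ j ∈ Finset.range n, (A j).indicator (fun _ => (1:ℝ≥0∞)) ω
          = ∑ j ∈ F, (1:ℝ≥0∞) := by
        rw [hF, Finset.sum_filter]
        refine Finset.sum_congr rfl fun j _ => ?_
        by_cases h : ω ∈ A j <;> simp [Set.indicator_apply, h]
      have himg : ∀ m ∈ F.image w,
          ({ω' | S m ω' ≤ c}).indicator (fun _ => (1:ℝ≥0∞)) ω = 1 := by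
        intro m hm
        obtain ⟨j, hj, rfl⟩ := Finset.mem_image.mp hm
        have hspec := hwspec j hj
        have hjn : j < n := Finset.mem_range.mp (Finset.mem_filter.mp hj).1
        have hle : S (w j) ω ≤ c := by
          have h1 := hspec.2
          have hcast : (j:ℝ) + 1 ≤ n := by exact_mod_cast hjn
          rw [hcdef]
          nlinarith
        simp [Set.indicator_apply, hle]
      calc ∑ j ∈ Finset.range n, (A j).indicator (fun _ => (1:ℝ≥0∞)) ω
          = ∑ j ∈ F, (1:ℝ≥0∞) := hLHS
        _ = (F.card : ℝ≥0∞) := by simp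
        _ = ((F.image w).card : ℝ≥0∞) := by rw [Finset.card_image_of_injOn hinj]
        _ = ∑ m ∈ F.image w, (1:ℝ≥0∞) := by simp
        _ = ∑ m ∈ F.image w, ({ω' | S m ω' ≤ c}).indicator (fun _ => (1:ℝ≥0∞)) ω :=
            Finset.sum_congr rfl fun m hm => (himg m hm).symm
        _ ≤ ∑' m : ℕ, ({ω' | S m ω' ≤ c}).indicator (fun _ => (1:ℝ≥0∞)) ω :=
            ENNReal.sum_le_tsum _
    calc (n : ℝ≥0∞) * ENNReal.ofReal c₀
        = ∑ _j ∈ Finset.range n, ENNReal.ofReal c₀ := by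
          simp [Finset.sum_const, mul_comm]
      _ ≤ ∑ j ∈ Finset.range n, μ (A j) := Finset.sum_le_sum fun j _ => hAc₀ j
      _ = ∫⁻ ω, ∑ j ∈ Finset.range n, (A j).indicator (fun _ => (1:ℝ≥0∞)) ω ∂μ := by
          rw [lintegral_finset_sum _ (fun j _ => measurable_const.indicator (hAmeas j))]
          exact Finset.sum_congr rfl fun j _ => (lintegral_indicator_one (hAmeas j)).symm
      _ ≤ ∫⁻ ω, ∑' m : ℕ, ({ω' | S m ω' ≤ c}).indicator (fun _ => (1:ℝ≥0∞)) ω ∂μ :=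
          lintegral_mono fun ω => hcount ω
      _ = ∑' m : ℕ, μ {ω' | S m ω' ≤ c} := by
          rw [lintegral_tsum fun m => (measurable_const.indicator
            (show MeasurableSet {ω' | S m ω' ≤ c} from (hSmeas m) measurableSet_Iic)).aemeasurable]
          exact tsum_congr fun m => lintegral_indicator_one
            (show MeasurableSet {ω' | S m ω' ≤ c} from (hSmeas m) measurableSet_Iic)
      _ ≤ ∑' m : ℕ, μ {ω | S' m ω ≤ c} := by
          refine ENNReal.tsum_le_tsum fun m => measure_mono fun ω hω => ?_
          exact le_trans (hS'leS m ω) hω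
  -- combine and convert to reals
  set i := I.toReal with hi
  have hinn : 0 ≤ i := ENNReal.toReal_nonneg
  have hInn : I = ENNReal.ofReal i := (ENNReal.ofReal_toReal hIfin).symm
  have hreal : ∀ (n : ℕ) (ε : ℝ), 0 < ε → i * ((n:ℝ) * c₀) ≤ n * (L + ε) + M := by
    intro n ε hε
    have h1 : I * ((n : ℝ≥0∞) * ENNReal.ofReal c₀) ≤ ENNReal.ofReal ((n:ℝ) * (L + ε) + M) :=
      calc I * ((n : ℝ≥0∞) * ENNReal.ofReal c₀)
          ≤ I * ∑' m : ℕ, μ {ω | S' m ω ≤ (n:ℝ) * (L+ε)} :=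
            mul_le_mul_right (hit n ε hε) I
        _ ≤ ENNReal.ofReal ((n:ℝ) * (L + ε) + M) := wald _ (by positivity)
    have h2 : (n : ℝ≥0∞) * ENNReal.ofReal c₀ = ENNReal.ofReal ((n:ℝ) * c₀) := by
      rw [ENNReal.ofReal_mul (by positivity)]
      simp
    rw [hInn, h2, ← ENNReal.ofReal_mul hinn] at h1
    exact (ENNReal.ofReal_le_ofReal_iff (by positivity)).mp h1
  have hfinal : i * c₀ ≤ L := by
    refine le_of_forall_pos_le_add fun δ hδ => ?_
    set n : ℕ := ⌈2 * M / δ⌉₊ + 1 with hn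
    have hnpos : (0:ℝ) < n := by positivity
    have hnge : 2 * M / δ ≤ (n:ℝ) := by
      calc 2 * M / δ ≤ (⌈2 * M / δ⌉₊ : ℝ) := Nat.le_ceil _
        _ ≤ (n:ℝ) := by rw [hn]; push_cast; linarith
    have hM2 : 2 * M ≤ (n:ℝ) * δ := by
      rw [div_le_iff₀ hδ] at hnge; linarith
    have h := hreal n (δ/2) (by linarith)
    nlinarith
  rw [hI] at hInn ⊢
  rw [hInn]
  exact ENNReal.ofReal_le_ofReal ((le_div_iff₀ hc₀).mpr hfinal)

/-- For a delayed renewal process S_m = ξ₀ + ⋯ + ξ_m with i.i.d. positive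
increments ξ_k (k ≥ 1), a uniform lower bound c₀ on the probability of hitting every
interval [r, r+L] forces E[ξ₁] ≤ L/c₀. -/
theorem stmt13 {Ω : Type*} [MeasurableSpace Ω] (μ : Measure Ω) [IsProbabilityMeasure μ]
    (ξ : ℕ → Ω → ℝ)
    (hmeas : ∀ k, Measurable (ξ k))
    (hindep : iIndepFun ξ μ)
    (hident : ∀ k, 1 ≤ k → IdentDistrib (ξ k) (ξ 1) μ μ)
    (hpos : ∀ k, 1 ≤ k → ∀ᵐ ω ∂μ, 0 < ξ k ω)
    (hdelay : ∀ᵐ ω ∂μ, 0 ≤ ξ 0 ω)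
    (c₀ L : ℝ) (hc₀ : 0 < c₀) (hL : 0 < L)
    (hhit : ∀ r : ℝ, 0 ≤ r → ENNReal.ofReal c₀ <
      μ {ω | ∃ m : ℕ, 1 ≤ m ∧ (∑ k ∈ Finset.range (m + 1), ξ k ω) ∈ Set.Icc r (r + L)}) :
    ∫⁻ ω, ENNReal.ofReal (ξ 1 ω) ∂μ ≤ ENNReal.ofReal (L / c₀) := by
  have key : ∀ j : ℕ, ∫⁻ ω, ENNReal.ofReal (min (ξ 1 ω) ((j:ℝ)+1)) ∂μ
      ≤ ENNReal.ofReal (L / c₀) := fun j =>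
    stmt13_trunc μ ξ hmeas hindep hident hpos hdelay c₀ L hc₀ hL hhit ((j:ℝ)+1) (by positivity)
  have hsup : ∀ ω, (⨆ j : ℕ, ENNReal.ofReal (min (ξ 1 ω) ((j:ℝ)+1))) = ENNReal.ofReal (ξ 1 ω) := by
    intro ω
    apply le_antisymm
    · exact iSup_le fun j => ENNReal.ofReal_le_ofReal (min_le_left _ _)
    · refine le_trans ?_ (le_iSup (fun j : ℕ => ENNReal.ofReal (min (ξ 1 ω) ((j:ℝ)+1))) ⌈ξ 1 ω⌉₊)
      apply ENNReal.ofReal_le_ofReal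
      refine le_min le_rfl ?_
      have := Nat.le_ceil (ξ 1 ω)
      linarith
  calc ∫⁻ ω, ENNReal.ofReal (ξ 1 ω) ∂μ
      = ∫⁻ ω, ⨆ j : ℕ, ENNReal.ofReal (min (ξ 1 ω) ((j:ℝ)+1)) ∂μ :=
        lintegral_congr fun ω => (hsup ω).symm
    _ = ⨆ j : ℕ, ∫⁻ ω, ENNReal.ofReal (min (ξ 1 ω) ((j:ℝ)+1)) ∂μ := by
        refine lintegral_iSup (fun j => ?_) (fun a b hab ω => ?_)
        · exact ENNReal.measurable_ofReal.comp ((hmeas 1).min measurable_const)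
        · refine ENNReal.ofReal_le_ofReal (min_le_min le_rfl ?_)
          have : (a:ℝ) ≤ b := Nat.cast_le.mpr hab
          linarith
    _ ≤ ENNReal.ofReal (L / c₀) := iSup_le key
end
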